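/- Let S = ⟨a_0,…,a_g⟩ be a numerical semigroup that is free for some arrangement of its generators. Then c(S) = 2·δ(S), where c(S) is the conductor of S and δ(S) is the number of gaps of S, i.e. the cardinality of the finite set ℕ∖S. Equivalently, S is symmetric: for every integer s with 0 ≤ s ≤ c(S) − 1, s ∈ S if and only if c(S) − 1 − s ∉ S. -/

import Mathlib

/-- `eSeq a i = gcd(a 0, …, a i)`. -/
def eSeq (a : ℕ → ℕ) : ℕ → ℕ
  | 0 => a 0
  | i + 1 => Nat.gcd (eSeq a i) (a (i + 1))

/-- `nSeq a i = e_{i-1} / e_i` (intended for `1 ≤ i`). -/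
def nSeq (a : ℕ → ℕ) (i : ℕ) : ℕ := eSeq a (i - 1) / eSeq a i

/-- `gen a i = ⟨a 0, …, a i⟩`, the set of all ℕ-linear combinations. -/
def gen (a : ℕ → ℕ) (i : ℕ) : Set ℕ :=
  {s | ∃ c : ℕ → ℕ, s = ∑ j ∈ Finset.range (i + 1), c j * a j}

/-- The semigroup `S = ⟨a 0, …, a g⟩` is free for the arrangement `(a 0, …, a g)`. -/
def IsFreeArr (a : ℕ → ℕ) (g : ℕ) : Prop :=
  eSeq a g = 1 ∧ ∀ i, 1 ≤ i → i ≤ g → nSeq a i * a i ∈ gen a (i - 1)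

/-- The conductor of a set `T ⊆ ℕ`: the least `c` with `c + ℕ ⊆ T`. -/
noncomputable def conductorOf (T : Set ℕ) : ℕ := sInf {c : ℕ | ∀ m, c ≤ m → m ∈ T}

/-!
Write `σ(c) = ∑_{i=1}^g c_i a_i` and call `c` reduced if `c_i < n_i` for all `i`. Freeness,
through division with remainder by `n_i` from the top index down, writes every element of `S`
as `k a_0 + σ(c)` with `c` reduced. Since `gcd(e_{i-1}, a_i) = e_i`, the values `σ(c)` of reduced
`c` are pairwise incongruent modulo `a_0`, and as `e_g = 1` they meet every residue class. So they
form the Apéry set of `S` with respect to `a_0`: `m ∈ S` iff `σ(c) ≤ m` for the reduced `c` with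
`σ(c) ≡ m`. Its largest element is `W = σ(n - 1)`, so the conductor is `W + 1 - a_0`, and the
involution `c ↦ n - 1 - c`, with `σ(c) + σ(n - 1 - c) = W`, shows that `s ↦ W - a_0 - s`
exchanges elements and gaps below the conductor; counting gives `c(S) = 2 δ(S)`.
-/

open Finset

section Gcds

variable (a : ℕ → ℕ)

lemma eSeq_dvd_of_le {j k : ℕ} (hjk : j ≤ k) : eSeq a k ∣ a j := by
  induction k with
  | zero => rw [Nat.le_zero.mp hjk]; rfl
  | succ k ih =>
    rcases Nat.of_le_succ hjk with hj | rfl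
    · exact (Nat.gcd_dvd_left _ _).trans (ih hj)
    · exact Nat.gcd_dvd_right _ _

lemma dvd_eSeq {d k : ℕ} (hd : ∀ j ≤ k, d ∣ a j) : d ∣ eSeq a k := by
  induction k with
  | zero => exact hd 0 le_rfl
  | succ k ih => exact Nat.dvd_gcd (ih fun j hj => hd j (by omega)) (hd (k + 1) le_rfl)

lemma eSeq_pos (h0 : 0 < a 0) (k : ℕ) : 0 < eSeq a k :=
  Nat.pos_of_dvd_of_pos (eSeq_dvd_of_le a (Nat.zero_le k)) h0

lemma nSeq_succ_pos (h0 : 0 < a 0) (k : ℕ) : 0 < nSeq a (k + 1) :=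
  Nat.div_pos (Nat.le_of_dvd (eSeq_pos a h0 k) (Nat.gcd_dvd_left _ _)) (eSeq_pos a h0 (k + 1))

end Gcds

section Semigroup

variable (a : ℕ → ℕ) (g : ℕ)

lemma zero_mem_gen : 0 ∈ gen a g := ⟨0, by simp⟩

def genAddSubmonoid : AddSubmonoid ℕ where
  carrier := gen a g
  zero_mem' := zero_mem_gen a g
  add_mem' := by
    rintro _ _ ⟨c, rfl⟩ ⟨d, rfl⟩
    exact ⟨c + d, by simp only [Pi.add_apply, add_mul, sum_add_distrib]⟩

lemma apply_mem_gen {i : ℕ} (hi : i ≤ g) : a i ∈ gen a g :=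
  ⟨Pi.single i 1, by
    rw [sum_eq_single_of_mem i (mem_range.mpr (Nat.lt_succ_of_le hi)) fun j _ hji => by
      simp [hji]]
    simp⟩

lemma closure_le_genAddSubmonoid :
    AddSubmonoid.closure (a '' Set.Iic g) ≤ genAddSubmonoid a g :=
  AddSubmonoid.closure_le.mpr <| by
    rintro _ ⟨i, hi, rfl⟩
    exact apply_mem_gen a g hi

lemma exists_forall_ge_mem_gen (h1 : eSeq a g = 1) : ∃ N, ∀ m, N ≤ m → m ∈ gen a g := by
  obtain ⟨N, hN⟩ := Nat.exists_mem_closure_of_ge (a '' Set.Iic g)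
  have hgcd : Nat.setGcd (a '' Set.Iic g) ∣ 1 :=
    h1 ▸ dvd_eSeq a fun j hj => Nat.setGcd_dvd_of_mem ⟨j, hj, rfl⟩
  exact ⟨N, fun m hm => closure_le_genAddSubmonoid a g (hN m hm (hgcd.trans (one_dvd m)))⟩

end Semigroup

section Apery

variable (a : ℕ → ℕ)

def coeffSum (g : ℕ) (c : ℕ → ℕ) : ℕ := ∑ i ∈ Icc 1 g, c i * a i

def IsReducedCoeff (g : ℕ) (c : ℕ → ℕ) : Prop := ∀ i ∈ Icc 1 g, c i < nSeq a i

variable {a}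

@[simp] lemma coeffSum_zero (c : ℕ → ℕ) : coeffSum a 0 c = 0 := rfl

lemma coeffSum_succ (g : ℕ) (c : ℕ → ℕ) :
    coeffSum a (g + 1) c = coeffSum a g c + c (g + 1) * a (g + 1) :=
  sum_Icc_succ_top (by omega) _

lemma coeffSum_congr {g : ℕ} {c c' : ℕ → ℕ} (h : ∀ i ∈ Icc 1 g, c i = c' i) :
    coeffSum a g c = coeffSum a g c' :=
  sum_congr rfl fun i hi => by rw [h i hi]

lemma coeffSum_mem_gen (g : ℕ) (c : ℕ → ℕ) : coeffSum a g c ∈ gen a g :=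
  (genAddSubmonoid a g).sum_mem fun i hi =>
    (genAddSubmonoid a g).nsmul_mem (apply_mem_gen a g (mem_Icc.mp hi).2) (c i)

lemma eSeq_dvd_coeffSum (g : ℕ) (c : ℕ → ℕ) : eSeq a g ∣ coeffSum a g c :=
  dvd_sum fun _ hi => dvd_mul_of_dvd_right (eSeq_dvd_of_le a (mem_Icc.mp hi).2) _

lemma IsReducedCoeff.of_succ {g : ℕ} {c : ℕ → ℕ} (hc : IsReducedCoeff a (g + 1) c) :
    IsReducedCoeff a g c :=
  fun i hi => hc i (Icc_subset_Icc_right (Nat.le_succ g) hi)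

lemma IsReducedCoeff.update_succ {g : ℕ} {c : ℕ → ℕ} (hc : IsReducedCoeff a g c) {r : ℕ}
    (hr : r < nSeq a (g + 1)) : IsReducedCoeff a (g + 1) (Function.update c (g + 1) r) := by
  intro i hi
  rcases eq_or_ne i (g + 1) with rfl | hne
  · simpa using hr
  · rw [Function.update_of_ne hne]
    exact hc i (mem_Icc.mpr ⟨(mem_Icc.mp hi).1, by have := (mem_Icc.mp hi).2; omega⟩)

lemma coeffSum_update_succ (g : ℕ) (c : ℕ → ℕ) (r : ℕ) :
    coeffSum a (g + 1) (Function.update c (g + 1) r) = coeffSum a g c + r * a (g + 1) := by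
  rw [coeffSum_succ, Function.update_self,
    coeffSum_congr fun i hi => Function.update_of_ne (by have := (mem_Icc.mp hi).2; omega) _ _]

lemma exists_reducedCoeff_of_mem_gen (h0 : 0 < a 0) {g : ℕ}
    (hfree : ∀ i, 1 ≤ i → i ≤ g → nSeq a i * a i ∈ gen a (i - 1)) {m : ℕ} (hm : m ∈ gen a g) :
    ∃ c, IsReducedCoeff a g c ∧ ∃ k, m = k * a 0 + coeffSum a g c := by
  induction g generalizing m with
  | zero =>
    obtain ⟨c, rfl⟩ := hm
    exact ⟨0, fun i hi => by simp at hi, c 0, by simp⟩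
  | succ g ih =>
    obtain ⟨c, rfl⟩ := hm
    set n := nSeq a (g + 1)
    set t := c (g + 1)
    have hna : n * a (g + 1) ∈ gen a g := by simpa using hfree (g + 1) (by omega) le_rfl
    have hx : ∑ j ∈ range (g + 1), c j * a j + t / n * (n * a (g + 1)) ∈ gen a g :=
      (genAddSubmonoid a g).add_mem ⟨c, rfl⟩ ((genAddSubmonoid a g).nsmul_mem hna _)
    obtain ⟨c', hc', k, hk⟩ := ih (fun i hi1 hi2 => hfree i hi1 (by omega)) hx
    refine ⟨Function.update c' (g + 1) (t % n), hc'.update_succ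
      (Nat.mod_lt _ (nSeq_succ_pos a h0 g)), k, ?_⟩
    have ht : t = n * (t / n) + t % n := (Nat.div_add_mod t n).symm
    rw [coeffSum_update_succ, sum_range_succ]
    linear_combination hk + a (g + 1) * ht

-- Since `gcd(e_k, a_{k+1}) = e_{k+1}`, cancelling `a_{k+1}` modulo `e_k` leaves a congruence
-- modulo exactly `e_k / e_{k+1} = n_{k+1}`, which pins down the digit `c_{k+1} < n_{k+1}`.
lemma coeffSum_eq_of_modEq (h0 : 0 < a 0) {g : ℕ} {c c' : ℕ → ℕ}
    (hc : IsReducedCoeff a g c) (hc' : IsReducedCoeff a g c')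
    (h : coeffSum a g c ≡ coeffSum a g c' [MOD a 0]) : coeffSum a g c = coeffSum a g c' := by
  induction g with
  | zero => rfl
  | succ k ih =>
    rw [coeffSum_succ, coeffSum_succ] at h ⊢
    have hmod : coeffSum a k c ≡ coeffSum a k c' [MOD eSeq a k] :=
      ((Nat.modEq_zero_iff_dvd.mpr (eSeq_dvd_coeffSum k c)).trans
        (Nat.modEq_zero_iff_dvd.mpr (eSeq_dvd_coeffSum k c')).symm)
    have hlast : c (k + 1) * a (k + 1) ≡ c' (k + 1) * a (k + 1) [MOD eSeq a k] :=
      hmod.add_left_cancel (h.of_dvd (eSeq_dvd_of_le a (Nat.zero_le k)))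
    have hdigit : c (k + 1) = c' (k + 1) :=
      (hlast.cancel_right_div_gcd (eSeq_pos a h0 k)).eq_of_lt_of_lt
        (hc (k + 1) (by simp)) (hc' (k + 1) (by simp))
    rw [hdigit] at h ⊢
    rw [ih hc.of_succ hc'.of_succ (Nat.ModEq.add_right_cancel' _ h)]

lemma exists_reducedCoeff_modEq (h0 : 0 < a 0) {g : ℕ} (hfree : IsFreeArr a g) (m : ℕ) :
    ∃ c, IsReducedCoeff a g c ∧ coeffSum a g c ≡ m [MOD a 0] := by
  obtain ⟨N, hN⟩ := exists_forall_ge_mem_gen a g hfree.1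
  have hmem : N * a 0 + m ∈ gen a g := hN _ (by nlinarith)
  obtain ⟨c, hc, k, hk⟩ := exists_reducedCoeff_of_mem_gen h0 hfree.2 hmem
  refine ⟨c, hc, ?_⟩
  calc coeffSum a g c ≡ k * a 0 + coeffSum a g c [MOD a 0] :=
        (Nat.mul_add_mod_self_right _ _ _).symm
    _ = N * a 0 + m := hk.symm
    _ ≡ m [MOD a 0] := Nat.mul_add_mod_self_right _ _ _

lemma mem_gen_iff_coeffSum_le (h0 : 0 < a 0) {g : ℕ} (hfree : IsFreeArr a g) {c : ℕ → ℕ}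
    (hc : IsReducedCoeff a g c) {m : ℕ} (hcm : coeffSum a g c ≡ m [MOD a 0]) :
    m ∈ gen a g ↔ coeffSum a g c ≤ m := by
  constructor
  · intro hm
    obtain ⟨c', hc', k, rfl⟩ := exists_reducedCoeff_of_mem_gen h0 hfree.2 hm
    rw [coeffSum_eq_of_modEq h0 hc hc' (hcm.trans (Nat.mul_add_mod_self_right _ _ _))]
    exact Nat.le_add_left _ _
  · intro hle
    obtain ⟨k, hk⟩ := (Nat.modEq_iff_dvd' hle).mp hcm
    rw [← Nat.add_sub_of_le hle, hk, mul_comm]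
    exact (genAddSubmonoid a g).add_mem (coeffSum_mem_gen g c)
      ((genAddSubmonoid a g).nsmul_mem (apply_mem_gen a g (Nat.zero_le g)) k)

end Apery

section Symmetric

variable {T : Set ℕ} {C : ℕ}

lemma conductorOf_eq_of_symmetric (h0 : 0 ∈ T) (hge : ∀ m, C ≤ m → m ∈ T)
    (hsymm : ∀ s < C, s ∈ T ↔ C - 1 - s ∉ T) : conductorOf T = C := by
  refine le_antisymm (Nat.sInf_le hge) (le_csInf ⟨C, hge⟩ fun b hb => ?_)
  by_contra! hbC
  have hlast := hsymm (C - 1) (by omega)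
  rw [Nat.sub_self] at hlast
  exact hlast.mp (hb _ (by omega)) h0

lemma two_mul_ncard_compl_of_symmetric (hge : ∀ m, C ≤ m → m ∈ T)
    (hsymm : ∀ s < C, s ∈ T ↔ C - 1 - s ∉ T) : 2 * {m | m ∉ T}.ncard = C := by
  classical
  have hgaps : {m | m ∉ T} = ↑((range C).filter (· ∉ T)) := by
    ext m
    simp only [Set.mem_ofPred_eq, coe_filter, mem_range]
    exact ⟨fun h => ⟨not_le.mp fun hm => h (hge m hm), h⟩, And.right⟩
  have hreflect : #((range C).filter (· ∉ T)) = #((range C).filter (· ∈ T)) := by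
    rw [card_filter, card_filter, ← sum_range_reflect]
    exact sum_congr rfl fun s hs => by simp only [hsymm s (mem_range.mp hs)]
  have hsplit := card_filter_add_card_filter_not (s := range C) (· ∈ T)
  rw [card_range] at hsplit
  rw [hgaps, Set.ncard_coe_finset]
  omega

end Symmetric

section FreeSemigroup

variable {a : ℕ → ℕ} {g : ℕ}

variable (a g) in
def aperyMax : ℕ := coeffSum a g (fun i => nSeq a i - 1)

variable (a g) in
def freeConductor : ℕ := aperyMax a g + 1 - a 0

lemma IsReducedCoeff.complement {c : ℕ → ℕ} (hc : IsReducedCoeff a g c) :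
    IsReducedCoeff a g (fun i => nSeq a i - 1 - c i) :=
  fun i hi => by dsimp only; have := hc i hi; omega

lemma IsReducedCoeff.coeffSum_le {c : ℕ → ℕ} (hc : IsReducedCoeff a g c) :
    coeffSum a g c ≤ aperyMax a g :=
  sum_le_sum fun i hi => Nat.mul_le_mul_right _ (by dsimp only; have := hc i hi; omega)

lemma IsReducedCoeff.coeffSum_add_complement {c : ℕ → ℕ} (hc : IsReducedCoeff a g c) :
    coeffSum a g c + coeffSum a g (fun i => nSeq a i - 1 - c i) = aperyMax a g := by
  rw [aperyMax, coeffSum, coeffSum, coeffSum, ← sum_add_distrib]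
  exact sum_congr rfl fun i hi => by
    rw [← add_mul, Nat.add_sub_cancel' (by have := hc i hi; omega)]

lemma mem_gen_of_freeConductor_le (h0 : 0 < a 0) (hfree : IsFreeArr a g) {m : ℕ}
    (hm : freeConductor a g ≤ m) : m ∈ gen a g := by
  obtain ⟨c, hc, hcm⟩ := exists_reducedCoeff_modEq h0 hfree m
  have hW := hc.coeffSum_le
  have hF : freeConductor a g = aperyMax a g + 1 - a 0 := rfl
  exact (mem_gen_iff_coeffSum_le h0 hfree hc hcm).mpr (hcm.le_of_lt_add (by omega))

lemma mem_gen_iff_not_mem_gen_reflect (h0 : 0 < a 0) (hfree : IsFreeArr a g) {s : ℕ}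
    (hs : s < freeConductor a g) : s ∈ gen a g ↔ freeConductor a g - 1 - s ∉ gen a g := by
  obtain ⟨c, hc, hcs⟩ := exists_reducedCoeff_modEq h0 hfree s
  have hW := hc.coeffSum_add_complement
  have hF : freeConductor a g = aperyMax a g + 1 - a 0 := rfl
  have hcs' : coeffSum a g (fun i => nSeq a i - 1 - c i) ≡
      freeConductor a g - 1 - s [MOD a 0] := by
    refine Nat.ModEq.add_right_cancel (hcs.trans (Nat.add_modulus_modEq_iff.mpr rfl).symm) ?_
    rw [add_comm, hW, show freeConductor a g - 1 - s + (s + a 0) = aperyMax a g by omega]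
  rw [mem_gen_iff_coeffSum_le h0 hfree hc hcs,
    mem_gen_iff_coeffSum_le h0 hfree hc.complement hcs']
  have hgap : ¬(s < coeffSum a g c ∧ coeffSum a g c < s + a 0) :=
    fun h => (hcs.le_of_lt_add h.2).not_gt h.1
  omega

end FreeSemigroup

theorem stmt_9 (g : ℕ) (a : ℕ → ℕ) (hpos : ∀ i, i ≤ g → 0 < a i)
    (hfree : IsFreeArr a g) :
    conductorOf (gen a g) = 2 * Set.ncard {m : ℕ | m ∉ gen a g} ∧
    ∀ s : ℕ, (s : ℤ) ≤ (conductorOf (gen a g) : ℤ) - 1 →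
      (s ∈ gen a g ↔ (conductorOf (gen a g) - 1 - s) ∉ gen a g) := by
  have h0 := hpos 0 (Nat.zero_le g)
  have hge : ∀ m, freeConductor a g ≤ m → m ∈ gen a g :=
    fun _ => mem_gen_of_freeConductor_le h0 hfree
  have hsymm : ∀ s < freeConductor a g, s ∈ gen a g ↔ freeConductor a g - 1 - s ∉ gen a g :=
    fun _ => mem_gen_iff_not_mem_gen_reflect h0 hfree
  have hC := conductorOf_eq_of_symmetric (zero_mem_gen a g) hge hsymm
  refine ⟨hC.trans (two_mul_ncard_compl_of_symmetric hge hsymm).symm, fun s hs => ?_⟩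
  rw [hC] at hs ⊢
  exact hsymm s (by omega)
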